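/- Let M be a left 𝕆-module, let x₁, …, xₙ ∈ 𝒜(M) be ℝ-linearly independent associative elements, and let r₁, …, rₙ ∈ 𝕆. If y = Σᵢ rᵢxᵢ is itself an associative element of M, then every coefficient rᵢ is real: rᵢ ∈ ℝ for each i. -/

import Mathlib

noncomputable section

open scoped Quaternion

/-- The octonions, realized as pairs of quaternions via the Cayley–Dickson construction. -/
def Octo : Type := ℍ[ℝ] × ℍ[ℝ]

namespace Octo

instance : AddCommGroup Octo := inferInstanceAs (AddCommGroup (ℍ[ℝ] × ℍ[ℝ]))
instance : Module ℝ Octo := inferInstanceAs (Module ℝ (ℍ[ℝ] × ℍ[ℝ]))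

/-- Build an octonion from a pair of quaternions. -/
def mk (a b : ℍ[ℝ]) : Octo := (a, b)

/-- First quaternion component. -/
def p1 (x : Octo) : ℍ[ℝ] := (show ℍ[ℝ] × ℍ[ℝ] from x).1

/-- Second quaternion component. -/
def p2 (x : Octo) : ℍ[ℝ] := (show ℍ[ℝ] × ℍ[ℝ] from x).2

/-- Cayley–Dickson multiplication: `(a,b)(c,d) = (ac − d̄b, da + bc̄)`. -/
instance : Mul Octo :=
  ⟨fun x y => mk (p1 x * p1 y - star (p2 y) * p2 x) (p2 y * p1 x + p2 x * star (p1 y))⟩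

instance : One Octo := ⟨mk 1 0⟩

/-- Octonion conjugation: for `x = (a,b)`, `x̄ = (ā, −b)`. -/
def conj (x : Octo) : Octo := mk (star (p1 x)) (-(p2 x))

/-- The octonion associator `[x,y,z] = (xy)z − x(yz)`. -/
def assoc (x y z : Octo) : Octo := x * y * z - x * (y * z)

/-- The octonion commutator `[x,y] = xy − yx`. -/
def comm (x y : Octo) : Octo := x * y - y * x

/-- The canonical embedding of the reals into the octonions. -/
def ofReal (r : ℝ) : Octo := r • (1 : Octo)

end Octo

section OMod

variable {M : Type*} [AddCommGroup M] [Module ℝ M]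
variable {N : Type*} [AddCommGroup N] [Module ℝ N]

/-- `IsOMod sm` says that the scalar multiplication `sm : 𝕆 × M → M` makes the real vector
space `M` a left 𝕆-module: `sm` is ℝ-bilinear, unital, and the left associator is
alternating in its two octonion arguments. -/
structure IsOMod (sm : Octo → M → M) : Prop where
  smul_add : ∀ (p : Octo) (m n : M), sm p (m + n) = sm p m + sm p n
  add_smul : ∀ (p q : Octo) (m : M), sm (p + q) m = sm p m + sm q m
  real_smul : ∀ (r : ℝ) (p : Octo) (m : M), sm (r • p) m = r • sm p m
  smul_real : ∀ (r : ℝ) (p : Octo) (m : M), sm p (r • m) = r • sm p m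
  one_smul : ∀ m : M, sm 1 m = m
  alt : ∀ (p q : Octo) (m : M),
    sm (p * q) m - sm p (sm q m) = -(sm (q * p) m - sm q (sm p m))

/-- The left associator `[p,q,m] = (pq)m − p(qm)`. -/
def oLassoc (sm : Octo → M → M) (p q : Octo) (m : M) : M :=
  sm (p * q) m - sm p (sm q m)

/-- The set `𝒜(M)` of associative elements: `[p,q,m] = 0` for all `p,q ∈ 𝕆`. -/
def assocSet (sm : Octo → M → M) : Set M :=
  {m | ∀ p q : Octo, oLassoc sm p q m = 0}

/-- The set `𝒜⁻(M)` of conjugate associative elements: `(pq)m = q(pm)` for all `p,q ∈ 𝕆`. -/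
def conjAssocSet (sm : Octo → M → M) : Set M :=
  {m | ∀ p q : Octo, sm (p * q) m = sm q (sm p m)}

/-- A homomorphism of left 𝕆-modules: an ℝ-linear map commuting with 𝕆-scalar
multiplication. -/
def IsOHom (sm : Octo → M → M) (sm' : Octo → N → N) (f : M → N) : Prop :=
  IsLinearMap ℝ f ∧ ∀ (p : Octo) (m : M), f (sm p m) = sm' p (f m)

/-- Two left 𝕆-modules are isomorphic if there is a bijective homomorphism between them. -/
def OIso (sm : Octo → M → M) (sm' : Octo → N → N) : Prop :=
  ∃ f : M → N, IsOHom sm sm' f ∧ Function.Bijective f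

/-- A submodule: a real subspace closed under 𝕆-scalar multiplication. -/
structure IsOSubmodule (sm : Octo → M → M) (S : Set M) : Prop where
  zero_mem : (0 : M) ∈ S
  add_mem : ∀ {x y : M}, x ∈ S → y ∈ S → x + y ∈ S
  smul_mem : ∀ (r : ℝ) {x : M}, x ∈ S → r • x ∈ S
  osmul_mem : ∀ (p : Octo) {x : M}, x ∈ S → sm p x ∈ S

/-- `⟨m⟩_𝕆`, the smallest submodule containing `m`, as a set. -/
def genSet (sm : Octo → M → M) (m : M) : Set M :=
  ⋂₀ {S : Set M | IsOSubmodule sm S ∧ m ∈ S}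

/-- An element `m` is cyclic if `⟨m⟩_𝕆 = 𝕆m`. -/
def IsOCyclic (sm : Octo → M → M) (m : M) : Prop :=
  genSet sm m = {x | ∃ p : Octo, x = sm p m}

/-- 𝕆-linear independence of a subset `S ⊆ M`: any finite 𝕆-linear combination of
distinct elements of `S` that vanishes has all coefficients zero. -/
def OLinIndep (sm : Octo → M → M) (S : Set M) : Prop :=
  ∀ (n : ℕ) (s : Fin n → M) (r : Fin n → Octo), Function.Injective s → (∀ i, s i ∈ S) →
    (∑ i, sm (r i) (s i)) = 0 → ∀ i, r i = 0

end OMod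

/-- The canonical left 𝕆-module structure on 𝕆 itself. -/
def oSmul : Octo → Octo → Octo := fun p x => p * x

/-- The left 𝕆-module structure `𝕆̄` on 𝕆: `p ·̂ x = p̄x`. -/
def oBarSmul : Octo → Octo → Octo := fun p x => Octo.conj p * x

/-!
For associative `xᵢ` the map `c ↦ Σ cᵢxᵢ` from `𝕆ⁿ` to `M` is 𝕆-equivariant, so its kernel is an
ℝ-subspace of `𝕆ⁿ` stable under left multiplication. Left multiplications generate `End_ℝ(𝕆)`:
explicitly, a signed sum of triple left multiplications along the lines of the Fano plane is
`8 · Re`. Hence such a subspace is zero as soon as it contains no nonzero real vector, which is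
ℝ-linear independence of the `xᵢ`; so the `xᵢ` are 𝕆-linearly independent. Since `y` and the `xᵢ`
are associative, `[p,q,y] = Σ [p,q,rᵢ] xᵢ = 0`, so every `rᵢ` lies in the nucleus of `𝕆`, which
is `ℝ`.
-/

namespace Octo

@[simp] lemma p1_mk (a b : ℍ[ℝ]) : (mk a b).p1 = a := rfl
@[simp] lemma p2_mk (a b : ℍ[ℝ]) : (mk a b).p2 = b := rfl
@[simp] lemma p1_mul (x y : Octo) : (x * y).p1 = x.p1 * y.p1 - star y.p2 * x.p2 := rfl
@[simp] lemma p2_mul (x y : Octo) : (x * y).p2 = y.p2 * x.p1 + x.p2 * star y.p1 := rfl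
@[simp] lemma p1_one : (1 : Octo).p1 = 1 := rfl
@[simp] lemma p2_one : (1 : Octo).p2 = 0 := rfl
@[simp] lemma p1_zero : (0 : Octo).p1 = 0 := rfl
@[simp] lemma p2_zero : (0 : Octo).p2 = 0 := rfl
@[simp] lemma p1_add (x y : Octo) : (x + y).p1 = x.p1 + y.p1 := rfl
@[simp] lemma p2_add (x y : Octo) : (x + y).p2 = x.p2 + y.p2 := rfl
@[simp] lemma p1_sub (x y : Octo) : (x - y).p1 = x.p1 - y.p1 := rfl
@[simp] lemma p2_sub (x y : Octo) : (x - y).p2 = x.p2 - y.p2 := rfl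
@[simp] lemma p1_smul (r : ℝ) (x : Octo) : (r • x).p1 = r • x.p1 := rfl
@[simp] lemma p2_smul (r : ℝ) (x : Octo) : (r • x).p2 = r • x.p2 := rfl
@[simp] lemma p1_conj (x : Octo) : (conj x).p1 = star x.p1 := rfl
@[simp] lemma p2_conj (x : Octo) : (conj x).p2 = -x.p2 := rfl

@[ext] lemma ext {x y : Octo} (h1 : x.p1 = y.p1) (h2 : x.p2 = y.p2) : x = y := Prod.ext h1 h2

def qI : ℍ[ℝ] := ⟨0, 1, 0, 0⟩
def qJ : ℍ[ℝ] := ⟨0, 0, 1, 0⟩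
def qK : ℍ[ℝ] := ⟨0, 0, 0, 1⟩

@[simp] lemma qI_re : qI.re = 0 := rfl
@[simp] lemma qI_imI : qI.imI = 1 := rfl
@[simp] lemma qI_imJ : qI.imJ = 0 := rfl
@[simp] lemma qI_imK : qI.imK = 0 := rfl
@[simp] lemma qJ_re : qJ.re = 0 := rfl
@[simp] lemma qJ_imI : qJ.imI = 0 := rfl
@[simp] lemma qJ_imJ : qJ.imJ = 1 := rfl
@[simp] lemma qJ_imK : qJ.imK = 0 := rfl
@[simp] lemma qK_re : qK.re = 0 := rfl
@[simp] lemma qK_imI : qK.imI = 0 := rfl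
@[simp] lemma qK_imJ : qK.imJ = 0 := rfl
@[simp] lemma qK_imK : qK.imK = 1 := rfl

def e1 : Octo := mk qI 0
def e2 : Octo := mk qJ 0
def e3 : Octo := mk qK 0
def e4 : Octo := mk 0 1
def e5 : Octo := mk 0 qI
def e6 : Octo := mk 0 qJ
def e7 : Octo := mk 0 qK

/-- A signed sum over the seven lines of the Fano plane: with these signs every term contributes
`Re a` to the real part and the imaginary parts cancel. -/
def fanoSum (a : Octo) : Octo :=
  a - e1 * (e2 * (e3 * a)) - e1 * (e4 * (e5 * a)) + e1 * (e6 * (e7 * a))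
    - e2 * (e4 * (e6 * a)) - e2 * (e5 * (e7 * a)) - e3 * (e4 * (e7 * a)) + e3 * (e5 * (e6 * a))

lemma fanoSum_eq (a : Octo) : fanoSum a = (8 * a.p1.re) • (1 : Octo) := by
  ext <;> simp [fanoSum, e1, e2, e3, e4, e5, e6, e7]
  all_goals ring

lemma eq_zero_of_forall_re_mul_eq_zero {a : Octo} (h : ∀ s, (s * a).p1.re = 0) : a = 0 := by
  have hnorm : Quaternion.normSq a.p1 + Quaternion.normSq a.p2 = 0 := by
    simpa [Quaternion.star_mul_self] using h (conj a)
  have h1 := Quaternion.normSq_nonneg (a := a.p1)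
  have h2 := Quaternion.normSq_nonneg (a := a.p2)
  apply Octo.ext
  · exact Quaternion.normSq_eq_zero.mp (by linarith)
  · exact Quaternion.normSq_eq_zero.mp (by linarith)

lemma mem_range_ofReal_of_forall_assoc_eq_zero {a : Octo} (h : ∀ p q, assoc p q a = 0) :
    a ∈ Set.range ofReal := by
  have h12 := h e1 e2
  have h14 := h e1 e4
  have h24 := h e2 e4
  simp only [Octo.ext_iff, Quaternion.ext_iff] at h12 h14 h24
  simp [assoc, e1, e2, e4] at h12 h14 h24
  refine ⟨a.p1.re, ?_⟩
  ext <;> simp [ofReal] <;> linarith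

lemma fanoSum_mem {ι : Type*} {K : Submodule ℝ (ι → Octo)}
    (hmul : ∀ s, ∀ c ∈ K, (fun i => s * c i) ∈ K) {c : ι → Octo} (hc : c ∈ K) :
    (fun i => fanoSum (c i)) ∈ K := by
  have h3 (s t u : Octo) : (fun i => s * (t * (u * c i))) ∈ K :=
    hmul s _ (hmul t _ (hmul u c hc))
  exact K.add_mem (K.sub_mem (K.sub_mem (K.sub_mem (K.add_mem (K.sub_mem (K.sub_mem hc
    (h3 e1 e2 e3)) (h3 e1 e4 e5)) (h3 e1 e6 e7)) (h3 e2 e4 e6)) (h3 e2 e5 e7)) (h3 e3 e4 e7))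
    (h3 e3 e5 e6)

lemma eq_bot_of_forall_mul_mem {ι : Type*} (K : Submodule ℝ (ι → Octo))
    (hmul : ∀ s, ∀ c ∈ K, (fun i => s * c i) ∈ K)
    (hreal : ∀ a : ι → ℝ, (fun i => a i • (1 : Octo)) ∈ K → a = 0) : K = ⊥ := by
  refine (Submodule.eq_bot_iff K).mpr fun c hc => funext fun i => ?_
  refine eq_zero_of_forall_re_mul_eq_zero fun s => ?_
  have hfano := fanoSum_mem hmul (hmul s c hc)
  simp only [fanoSum_eq] at hfano
  simpa using congrFun (hreal _ hfano) i

end Octo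

lemma mul_smul_of_mem_assocSet {M : Type*} [AddCommGroup M] [Module ℝ M]
    {sm : Octo → M → M} {m : M} (hm : m ∈ assocSet sm) (p q : Octo) :
    sm (p * q) m = sm p (sm q m) :=
  sub_eq_zero.mp (hm p q)

namespace IsOMod

variable {M : Type*} [AddCommGroup M] [Module ℝ M] {sm : Octo → M → M} (h : IsOMod sm)
  {ι : Type*} [Fintype ι]

def smulLinear (p : Octo) : M →ₗ[ℝ] M where
  toFun := sm p
  map_add' := h.smul_add p
  map_smul' r m := h.smul_real r p m

def linearCombination (x : ι → M) : (ι → Octo) →ₗ[ℝ] M where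
  toFun c := ∑ i, sm (c i) (x i)
  map_add' c d := by simp only [Pi.add_apply, h.add_smul, Finset.sum_add_distrib]
  map_smul' r c := by simp only [Pi.smul_apply, h.real_smul, Finset.smul_sum, RingHom.id_apply]

variable {x : ι → M}

lemma linearCombination_apply (c : ι → Octo) :
    h.linearCombination x c = ∑ i, sm (c i) (x i) :=
  rfl

lemma linearCombination_mul (hx : ∀ i, x i ∈ assocSet sm) (s : Octo) (c : ι → Octo) :
    h.linearCombination x (fun i => s * c i) = sm s (h.linearCombination x c) := by
  simp only [linearCombination_apply, mul_smul_of_mem_assocSet (hx _)]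
  exact (map_sum (h.smulLinear s) _ _).symm

lemma oLassoc_linearCombination (hx : ∀ i, x i ∈ assocSet sm) (p q : Octo) (c : ι → Octo) :
    oLassoc sm p q (h.linearCombination x c) =
      h.linearCombination x (fun i => Octo.assoc p q (c i)) := by
  simp only [oLassoc, ← h.linearCombination_mul hx, ← map_sub]
  rfl

lemma ker_linearCombination_eq_bot (hx : ∀ i, x i ∈ assocSet sm)
    (hli : LinearIndependent ℝ x) : LinearMap.ker (h.linearCombination x) = ⊥ := by
  refine Octo.eq_bot_of_forall_mul_mem _ (fun s c hc => ?_) (fun a ha => ?_)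
  · rw [LinearMap.mem_ker, h.linearCombination_mul hx, LinearMap.mem_ker.mp hc]
    exact (h.smulLinear s).map_zero
  · refine funext (Fintype.linearIndependent_iff.mp hli a ?_)
    simpa [linearCombination_apply, h.real_smul, h.one_smul] using ha

end IsOMod

/-- If `x₁,…,xₙ ∈ 𝒜(M)` are ℝ-linearly independent and `y = Σ rᵢxᵢ` is itself
associative, then every coefficient `rᵢ` is real. -/
theorem stmt10 {M : Type*} [AddCommGroup M] [Module ℝ M]
    (sm : Octo → M → M) (h : IsOMod sm)
    (n : ℕ) (x : Fin n → M) (r : Fin n → Octo)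
    (hx : ∀ i, x i ∈ assocSet sm) (hli : LinearIndependent ℝ x)
    (hy : (∑ i, sm (r i) (x i)) ∈ assocSet sm) :
    ∀ i, r i ∈ Set.range Octo.ofReal := by
  have hinj := LinearMap.ker_eq_bot'.mp (h.ker_linearCombination_eq_bot hx hli)
  intro i
  refine Octo.mem_range_ofReal_of_forall_assoc_eq_zero fun p q => ?_
  have hassoc : h.linearCombination x (fun i => Octo.assoc p q (r i)) = 0 := by
    rw [← h.oLassoc_linearCombination hx]
    exact hy p q
  exact congrFun (hinj _ hassoc) i
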